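/- If α ∈ ℂ satisfies α^4 + 3α^2 + 1 = 0, then any point (z0,z1,z3) with z0 = 0 and z1^2 = 3(α^2+1) z3^2 is a singular point of the plane quartic F_α(z0,z1,z3) = z0^4 + z1^4 + (1+α^4) z3^4 - 6(α^2 z3^4 + (α^2+1)(z0^2+z1^2) z3^2 + z0^2 z1^2): both F_α and its three partial derivatives vanish there. -/

import Mathlib

noncomputable def Fq (t z0 z1 z3 : ℂ) : ℂ :=
  z0^4 + z1^4 + (1 + t^4) * z3^4
    - 6 * (t^2 * z3^4 + (t^2 + 1) * (z0^2 + z1^2) * z3^2 + z0^2 * z1^2)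

noncomputable def Fq0 (t z0 z1 z3 : ℂ) : ℂ :=
  4*z0^3 - 12*(t^2 + 1)*z0*z3^2 - 12*z0*z1^2

noncomputable def Fq1 (t z0 z1 z3 : ℂ) : ℂ :=
  4*z1^3 - 12*(t^2 + 1)*z1*z3^2 - 12*z1*z0^2

noncomputable def Fq3 (t z0 z1 z3 : ℂ) : ℂ :=
  4*(1 + t^4)*z3^3 - 24*t^2*z3^3 - 12*(t^2 + 1)*(z0^2 + z1^2)*z3

/-!
On the line `z0 = 0`, `F_α` and its partial derivatives are combinations of
`z1^2 - 3(α^2+1) z3^2` and `α^4 + 3α^2 + 1`, so both hypotheses together kill all four.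
-/

theorem Fq_zero_left (t z1 z3 : ℂ) :
    Fq t 0 z1 z3 = (z1^2 - 3*(t^2 + 1)*z3^2)^2 - 8*(t^4 + 3*t^2 + 1)*z3^4 := by
  unfold Fq; ring

theorem Fq0_zero_left (t z1 z3 : ℂ) : Fq0 t 0 z1 z3 = 0 := by
  unfold Fq0; ring

theorem Fq1_zero_left (t z1 z3 : ℂ) :
    Fq1 t 0 z1 z3 = 4*z1*(z1^2 - 3*(t^2 + 1)*z3^2) := by
  unfold Fq1; ring

theorem Fq3_zero_left (t z1 z3 : ℂ) :
    Fq3 t 0 z1 z3 =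
      -12*(t^2 + 1)*z3*(z1^2 - 3*(t^2 + 1)*z3^2) - 32*(t^4 + 3*t^2 + 1)*z3^3 := by
  unfold Fq3; ring

/-- If `α^4 + 3α^2 + 1 = 0`, `z0 = 0` and `z1^2 = 3(α^2+1) z3^2`, then `(z0,z1,z3)` is a
singular point of the plane quartic `F_α = 0`. -/
theorem singular_point_g21 (α z0 z1 z3 : ℂ) (hα : α^4 + 3*α^2 + 1 = 0)
    (h0 : z0 = 0) (h1 : z1^2 = 3*(α^2 + 1)*z3^2) :
    Fq α z0 z1 z3 = 0 ∧ Fq0 α z0 z1 z3 = 0 ∧ Fq1 α z0 z1 z3 = 0 ∧ Fq3 α z0 z1 z3 = 0 := by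
  subst h0
  have hz : z1^2 - 3*(α^2 + 1)*z3^2 = 0 := sub_eq_zero.mpr h1
  rw [Fq_zero_left, Fq0_zero_left, Fq1_zero_left, Fq3_zero_left, hz, hα]
  norm_num
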